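/- arXiv:1207.3768 — 6 statements merged into one kernel-verified Lean document; each statement's English description precedes it below -/
import Mathlib

section
/- For every z in the open unit disk, Re((1-z^2)/(1-z+z^2)) > 0. -/
/-!
Multiplying numerator and denominator by the conjugate of the denominator, the sign of
`Re ((1 - z²) / (1 - z + z²))` is that of `Re ((1 - z²) · conj (1 - z + z²))`, which factors as
`(1 - |z|²) (1 + |z|² - Re z)`; both factors are positive on the open unit disk.
-/

open Complex ComplexConjugate

lemma Complex.re_div_pos_of_re_mul_conj_pos {w v : ℂ} (h : 0 < (w * conj v).re) :
    0 < (w / v).re := by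
  have hv : v ≠ 0 := by
    rintro rfl
    simp at h
  rw [div_eq_mul_inv, inv_def, ← mul_assoc, re_mul_ofReal]
  exact mul_pos h (inv_pos.mpr (normSq_pos.mpr hv))

lemma Complex.re_mul_conj_one_sub_sq (z : ℂ) :
    ((1 - z ^ 2) * conj (1 - z + z ^ 2)).re = (1 - ‖z‖ ^ 2) * (1 + ‖z‖ ^ 2 - z.re) := by
  rw [Complex.sq_norm, normSq_apply]
  simp only [pow_two, mul_re, mul_im, sub_re, sub_im, add_re, add_im, one_re, one_im,
    conj_re, conj_im, map_sub, map_add, map_one, map_mul]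
  ring

theorem stmt1 (z : ℂ) (hz : ‖z‖ < 1) :
    0 < ((1 - z ^ 2) / (1 - z + z ^ 2)).re := by
  have hsq : ‖z‖ ^ 2 < 1 := by nlinarith [norm_nonneg z]
  have hre : z.re < 1 := (re_le_norm z).trans_lt hz
  apply re_div_pos_of_re_mul_conj_pos
  rw [re_mul_conj_one_sub_sq]
  exact mul_pos (by linarith) (by linarith [sq_nonneg ‖z‖])
end

section
/- For every z in the open unit disk, Re(1 - z^2 + (1+z)/(1-z)) > 0. -/
/-! Both summands have positive real part on the unit disk: `1 - z ^ 2` because `‖z ^ 2‖ < 1`,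
and the Cayley transform `(1 + z) / (1 - z)` because its real part is
`(1 - ‖z‖ ^ 2) / ‖1 - z‖ ^ 2`. -/

open Complex

namespace Complex

theorem one_add_div_one_sub_re (z : ℂ) :
    ((1 + z) / (1 - z)).re = (1 - normSq z) / normSq (1 - z) := by
  rw [div_re, ← add_div]
  congr 1
  simp only [add_re, sub_re, one_re, add_im, sub_im, one_im, normSq_apply]
  ring

theorem one_add_div_one_sub_re_pos {z : ℂ} (hz : ‖z‖ < 1) : 0 < ((1 + z) / (1 - z)).re := by
  have hz1 : z ≠ 1 := by rintro rfl; simp at hz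
  rw [one_add_div_one_sub_re]
  apply div_pos
  · rw [normSq_eq_norm_sq, sub_pos]
    exact pow_lt_one₀ (norm_nonneg z) hz two_ne_zero
  · exact normSq_pos.2 (sub_ne_zero.2 hz1.symm)

theorem one_sub_re_pos {w : ℂ} (hw : ‖w‖ < 1) : 0 < (1 - w).re := by
  rw [sub_re, one_re, sub_pos]
  exact (re_le_norm w).trans_lt hw

end Complex

theorem stmt5 (z : ℂ) (hz : ‖z‖ < 1) :
    0 < (1 - z ^ 2 + (1 + z) / (1 - z)).re := by
  have hz2 : ‖z ^ 2‖ < 1 := by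
    rw [norm_pow]
    exact pow_lt_one₀ (norm_nonneg z) hz two_ne_zero
  rw [add_re]
  exact add_pos (one_sub_re_pos hz2) (one_add_div_one_sub_re_pos hz)
end

section
/- For every z in the open unit disk, Re(1 - z^2 + (1+z^2)/(1-z^2)) > 0. -/
/-!
With `w = z ^ 2` in the unit disc, both summands have positive real part: `Re (1 - w) ≥ 1 - ‖w‖`,
and `Re ((1 + w) / (1 - w)) = (1 - ‖w‖ ^ 2) / ‖1 - w‖ ^ 2`.
-/

open Complex

theorem Complex.re_one_sub_pos {w : ℂ} (hw : ‖w‖ < 1) : 0 < (1 - w).re := by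
  rw [sub_re, one_re, sub_pos]
  exact (re_le_norm w).trans_lt hw

theorem Complex.re_one_add_div_one_sub_pos {w : ℂ} (hw : ‖w‖ < 1) :
    0 < ((1 + w) / (1 - w)).re := by
  have hw2 : w.re * w.re + w.im * w.im < 1 := by
    rw [← normSq_apply, normSq_eq_norm_sq]
    exact pow_lt_one₀ (norm_nonneg w) hw two_ne_zero
  have hne : 1 - w ≠ 0 := fun h => by
    rw [sub_eq_zero] at h
    simp [← h] at hw
  rw [div_re, ← add_div]
  refine div_pos ?_ (normSq_pos.mpr hne)
  simp only [add_re, sub_re, add_im, sub_im, one_re, one_im]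
  nlinarith

theorem stmt6 (z : ℂ) (hz : ‖z‖ < 1) :
    0 < (1 - z ^ 2 + (1 + z ^ 2) / (1 - z ^ 2)).re := by
  have hz2 : ‖z ^ 2‖ < 1 := by
    rw [norm_pow]
    exact pow_lt_one₀ (norm_nonneg z) hz two_ne_zero
  rw [add_re]
  exact add_pos (re_one_sub_pos hz2) (re_one_add_div_one_sub_pos hz2)
end

section
/- For every real θ that is not an integer multiple of π, the imaginary part of e^{iθ}(2-e^{iθ})/(2(1-e^{2iθ})) has absolute value at least √3/4. -/
/-!
With `z = e^{iθ}` one has `1 - z² = -2i sin θ · z`, so the expression equals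
`(2 - z) i / (4 sin θ)`, whose imaginary part is `(2 - cos θ) / (4 sin θ)`. The bound is then
`√3 |sin θ| ≤ 2 - cos θ`, which after squaring is `(2 cos θ - 1)² ≥ 0`.
-/

open Complex

theorem Complex.one_sub_exp_two_mul_mul_I (z : ℂ) :
    1 - exp (2 * z * I) = -2 * I * sin z * exp (z * I) := by
  rw [Complex.sin, mul_assoc 2 z I, two_mul, Complex.exp_add]
  have : exp (-z * I) * exp (z * I) = 1 := by rw [← Complex.exp_add]; simp
  linear_combination (-1 : ℂ) * this + (exp (z * I) * exp (-z * I) - exp (z * I) ^ 2) * I_sq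

theorem Complex.exp_mul_I_mul_div_one_sub_exp_two_mul_mul_I {z : ℂ} (hz : sin z ≠ 0) (w : ℂ) :
    exp (z * I) * w / (2 * (1 - exp (2 * z * I))) = w * I / (4 * sin z) := by
  rw [one_sub_exp_two_mul_mul_I]
  field_simp
  ring_nf
  rw [I_sq]
  ring

theorem Real.sqrt_three_mul_abs_sin_le_two_sub_cos (θ : ℝ) :
    √3 * |Real.sin θ| ≤ 2 - Real.cos θ := by
  refine (pow_le_pow_iff_left₀ (by positivity) (by linarith [Real.cos_le_one θ]) two_ne_zero).mp ?_
  rw [mul_pow, Real.sq_sqrt zero_le_three, sq_abs, Real.sin_sq]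
  linarith [sq_nonneg (2 * Real.cos θ - 1)]

theorem stmt9 (θ : ℝ) (h : Real.sin θ ≠ 0) :
    Real.sqrt 3 / 4 ≤
      |(exp (θ * I) * (2 - exp (θ * I)) / (2 * (1 - exp (2 * θ * I)))).im| := by
  have him : (exp (θ * I) * (2 - exp (θ * I)) / (2 * (1 - exp (2 * θ * I)))).im
      = (2 - Real.cos θ) / (4 * Real.sin θ) := by
    rw [exp_mul_I_mul_div_one_sub_exp_two_mul_mul_I (by exact_mod_cast h), ← ofReal_sin,
      ← ofReal_ofNat 4, ← ofReal_mul, div_ofReal_im]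
    simp [exp_ofReal_mul_I_re]
  rw [him, abs_div, abs_of_pos (by linarith [Real.cos_le_one θ] : 0 < 2 - Real.cos θ), abs_mul,
    abs_of_pos four_pos, le_div_iff₀ (by positivity)]
  linarith [Real.sqrt_three_mul_abs_sin_le_two_sub_cos θ]
end

section
/- For the harmonic function f(z) = Re(z/(1-z)^2) + i·Im(z/(1-z)), one has for all real t with |t| < π/2 and t ≠ 0 that ∂/∂t arg f(e^{it}) = (2 cos t)/(cos 2t - 3) < 0; in particular f is not starlike with respect to the origin. -/
/-!
On the unit circle `conj z = z⁻¹`, so `f` and `Df` restrict to rational functions of `z`: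
`Df = 2z/(1-z)³` and `f = (1 + 2z - z²)/(2(1-z)²)`. Writing `Re w = (w + conj w)/2` turns the
real part of `Df/f` into a rational identity in `z` and `z⁻¹`, which collapses to
`2(z + z⁻¹)/(z² + z⁻² - 6) = 2 cos t/(cos 2t - 3)` at `z = e^{it}`. The denominator is negative
and `cos t > 0` for `|t| < π/2`.
-/

open Complex Real ComplexConjugate

noncomputable section

-- `f = h + conj g` is the shear of the half-plane map `h - g = z/(1-z)` with dilatation `g'/h' = z`.
def shearH (z : ℂ) : ℂ := 1 / 2 * (z / (1 - z) ^ 2 + z / (1 - z))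

def shearG (z : ℂ) : ℂ := 1 / 2 * (z / (1 - z) ^ 2 - z / (1 - z))

def shearF (z : ℂ) : ℂ := shearH z + conj (shearG z)

def shearDF (z : ℂ) : ℂ := z * deriv shearH z - conj (z * deriv shearG z)

end

lemma hasDerivAt_div_one_sub_sq {w : ℂ} (hw : w ≠ 1) :
    HasDerivAt (fun z : ℂ => z / (1 - z) ^ 2) ((1 + w) / (1 - w) ^ 3) w := by
  have hw' : 1 - w ≠ 0 := sub_ne_zero.mpr hw.symm
  refine ((hasDerivAt_id' w).div (((hasDerivAt_id' w).const_sub 1).pow 2)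
    (pow_ne_zero 2 hw')).congr_deriv ?_
  simp only [Pi.pow_apply]
  field_simp
  ring

lemma hasDerivAt_div_one_sub {w : ℂ} (hw : w ≠ 1) :
    HasDerivAt (fun z : ℂ => z / (1 - z)) (1 / (1 - w) ^ 2) w := by
  have hw' : 1 - w ≠ 0 := sub_ne_zero.mpr hw.symm
  refine ((hasDerivAt_id' w).div ((hasDerivAt_id' w).const_sub 1) hw').congr_deriv ?_
  field_simp
  ring

lemma deriv_shearH {w : ℂ} (hw : w ≠ 1) : deriv shearH w = 1 / (1 - w) ^ 3 := by
  refine (((hasDerivAt_div_one_sub_sq hw).add (hasDerivAt_div_one_sub hw)).const_mul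
    (1 / 2 : ℂ)).deriv.trans ?_
  field_simp
  ring

lemma deriv_shearG {w : ℂ} (hw : w ≠ 1) : deriv shearG w = w / (1 - w) ^ 3 := by
  refine (((hasDerivAt_div_one_sub_sq hw).sub (hasDerivAt_div_one_sub hw)).const_mul
    (1 / 2 : ℂ)).deriv.trans ?_
  field_simp
  ring

lemma shearDF_eq {z : ℂ} (hz : ‖z‖ = 1) (hz1 : z ≠ 1) : shearDF z = 2 * z / (1 - z) ^ 3 := by
  have hz0 : z ≠ 0 := by rintro rfl; simp at hz
  simp only [shearDF, deriv_shearH hz1, deriv_shearG hz1, map_mul, map_div₀, map_pow, map_sub,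
    map_one, ← Complex.inv_eq_conj hz]
  field_simp
  ring

lemma shearF_eq {z : ℂ} (hz : ‖z‖ = 1) (hz1 : z ≠ 1) :
    shearF z = (1 + 2 * z - z ^ 2) / (2 * (1 - z) ^ 2) := by
  have hz0 : z ≠ 0 := by rintro rfl; simp at hz
  simp only [shearF, shearH, shearG, map_mul, map_div₀, map_pow, map_sub, map_one, map_ofNat,
    ← Complex.inv_eq_conj hz]
  field_simp
  ring

lemma one_add_two_mul_sub_sq_ne_zero {z : ℂ} (hz : ‖z‖ = 1) : 1 + 2 * z - z ^ 2 ≠ 0 := by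
  have hz0 : z ≠ 0 := by rintro rfl; simp at hz
  intro h
  have hsub : z - conj z = 2 := by
    rw [← Complex.inv_eq_conj hz]
    field_simp
    linear_combination -h
  have hre := congrArg Complex.re hsub
  simp at hre

lemma ofReal_re_shearDF_div_shearF {z : ℂ} (hz : ‖z‖ = 1) (hz1 : z ≠ 1) :
    ((shearDF z / shearF z).re : ℂ) = 2 * (z + z⁻¹) / (z ^ 2 + z⁻¹ ^ 2 - 6) := by
  have hz0 : z ≠ 0 := by rintro rfl; simp at hz
  have hp := one_add_two_mul_sub_sq_ne_zero hz
  -- the conjugated denominators, in the shape `field_simp` clears them to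
  have hm : z * (z + 2) - 1 ≠ 0 := by
    have hinv := one_add_two_mul_sub_sq_ne_zero (z := z⁻¹) (by rw [norm_inv, hz, inv_one])
    convert mul_ne_zero (pow_ne_zero 2 hz0) hinv using 1
    field_simp
  have hq : z ^ 4 + 1 - z ^ 2 * 6 ≠ 0 := by
    convert neg_ne_zero.mpr (mul_ne_zero hp hm) using 1
    ring
  rw [Complex.re_eq_add_conj, shearDF_eq hz hz1, shearF_eq hz hz1]
  simp only [map_mul, map_div₀, map_pow, map_sub, map_add, map_one, map_ofNat,
    ← Complex.inv_eq_conj hz]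
  field_simp
  ring

lemma exp_mul_I_add_inv (t : ℝ) : exp (t * I) + (exp (t * I))⁻¹ = 2 * Real.cos t := by
  rw [← Complex.exp_neg, ← neg_mul, ← Complex.two_cos, Complex.ofReal_cos]

lemma exp_mul_I_sq_add_inv_sq (t : ℝ) :
    exp (t * I) ^ 2 + (exp (t * I))⁻¹ ^ 2 = 2 * Real.cos (2 * t) := by
  rw [inv_pow, ← Complex.exp_nat_mul, ← exp_mul_I_add_inv (2 * t)]
  push_cast
  ring_nf

lemma re_shearDF_div_shearF_exp_mul_I {t : ℝ} (ht : exp (t * I) ≠ 1) :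
    (shearDF (exp (t * I)) / shearF (exp (t * I))).re =
      2 * Real.cos t / (Real.cos (2 * t) - 3) := by
  have hre := ofReal_re_shearDF_div_shearF (norm_exp_ofReal_mul_I t) ht
  rw [exp_mul_I_add_inv, exp_mul_I_sq_add_inv_sq] at hre
  rw [show 2 * (Real.cos (2 * t) : ℂ) - 6 = 2 * (Real.cos (2 * t) - 3) by ring,
    mul_div_mul_left _ _ two_ne_zero] at hre
  exact_mod_cast hre

theorem stmt15 (t : ℝ) (ht : |t| < π / 2) (ht0 : t ≠ 0)
    (h g f Df : ℂ → ℂ)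
    (hh : h = fun z => (1 / 2) * (z / (1 - z) ^ 2 + z / (1 - z)))
    (hg : g = fun z => (1 / 2) * (z / (1 - z) ^ 2 - z / (1 - z)))
    (hf : f = fun z => h z + (starRingEnd ℂ) (g z))
    (hDf : Df = fun z => z * deriv h z - (starRingEnd ℂ) (z * deriv g z)) :
    (Df (exp (t * I)) / f (exp (t * I))).re =
        2 * Real.cos t / (Real.cos (2 * t) - 3) ∧
      2 * Real.cos t / (Real.cos (2 * t) - 3) < 0 := by
  subst hDf hf hh hg
  obtain ⟨htl, htr⟩ := abs_lt.mp ht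
  have hz1 : exp (t * I) ≠ 1 := by
    intro h1
    have hcos := congrArg Complex.re h1
    rw [exp_ofReal_mul_I_re, one_re,
      Real.cos_eq_one_iff_of_lt_of_lt (by linarith [pi_pos]) (by linarith [pi_pos])] at hcos
    exact ht0 hcos
  refine ⟨re_shearDF_div_shearF_exp_mul_I hz1, div_neg_of_pos_of_neg ?_ ?_⟩
  · exact mul_pos two_pos (Real.cos_pos_of_mem_Ioo ⟨htl, htr⟩)
  · linarith [Real.cos_le_one (2 * t)]
end

section
/- If g(z) = Σ_{n≥1} b_n z^n is analytic on the unit disk with g(0)=0 and g(z) ≺ z/(1-z) (i.e., g = (z/(1-z))∘φ for some analytic φ: D → D with φ(0)=0), then |b_n| ≤ 1 for all n ≥ 1. -/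
open Complex Metric Real intervalIntegral

lemma Efact (l : ℤ) : (∫ θ in (0:ℝ)..(2*π), Complex.exp (l * θ * Complex.I))
    = if l = 0 then (2*π : ℂ) else 0 := by
  rcases eq_or_ne l 0 with h | h
  · simp [h]
  · have hc : (l : ℂ) * Complex.I ≠ 0 := by
      simp [Complex.ext_iff, Complex.I_ne_zero, h]
    have key := integral_exp_mul_complex (a := 0) (b := 2*π) hc
    simp only [show ∀ θ : ℝ, (l:ℂ) * θ * Complex.I = (l * Complex.I) * θ by intro θ; ring] at *
    rw [key]
    push_cast
    rw [show (l:ℂ) * Complex.I * (2*π) = l * (2*π*Complex.I) by ring,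
      Complex.exp_int_mul_two_pi_mul_I]
    simp [h]

lemma refact (u : ℂ) (hu : ‖u‖ < 1) : -(1/2) ≤ (u / (1 - u)).re := by
  have h2 : Complex.normSq u < 1 := by
    have : ‖u‖ < 1 := hu
    nlinarith [Complex.sq_norm u, norm_nonneg u]
  rcases eq_or_ne (1 - u) 0 with h | h
  · exfalso; have : u = 1 := by linear_combination -h
    rw [this] at h2; simp [Complex.normSq_one] at h2
  have hpos : 0 < Complex.normSq (1 - u) := Complex.normSq_pos.2 h
  rw [Complex.div_re]
  rw [← add_div, le_div_iff₀ hpos]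
  simp only [Complex.sub_re, Complex.sub_im, Complex.one_re, Complex.one_im,
    Complex.normSq_apply] at *
  nlinarith

lemma hasSum_int (g : ℂ → ℂ) (b : ℕ → ℂ)
    (hgsum : ∀ z ∈ ball (0 : ℂ) 1, HasSum (fun n : ℕ => b n * z ^ n) (g z))
    (hgc : ContinuousOn g (ball 0 1)) (r : ℝ) (hr0 : 0 < r) (hr1 : r < 1) (m : ℤ) :
    HasSum (fun k : ℕ => b k * (r:ℂ) ^ k *
        ∫ θ in (0:ℝ)..(2*π), Complex.exp (((((k:ℤ) + m : ℤ)):ℂ) * θ * Complex.I))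
      (∫ θ in (0:ℝ)..(2*π), g (r * Complex.exp (θ * Complex.I)) * Complex.exp (m * θ * Complex.I)) := by
  set ρ : ℝ := (1 + r)/2 with hρdef
  have hrρ : r < ρ := by simp [hρdef]; linarith
  have hρ1 : ρ < 1 := by simp [hρdef]; linarith
  have hρ0 : 0 < ρ := by positivity
  have hρball : (ρ : ℂ) ∈ ball (0:ℂ) 1 := by
    simp [Complex.norm_real, abs_of_pos hρ0, hρ1]
  have hsum := (hgsum _ hρball).summable
  have hbdd : BddAbove (Set.range fun k => ‖b k * (ρ:ℂ) ^ k‖) :=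
    (hsum.tendsto_atTop_zero.norm.bddAbove_range)
  obtain ⟨C, hC⟩ := hbdd
  have hC' : ∀ k : ℕ, ‖b k‖ * ρ ^ k ≤ C := by
    intro k
    have := hC (Set.mem_range_self (f := fun k => ‖b k * (ρ:ℂ) ^ k‖) k)
    simpa [abs_of_pos hρ0] using this
  have hcirc : ∀ θ : ℝ, (↑r * Complex.exp (θ * Complex.I)) ∈ ball (0:ℂ) 1 := by
    intro θ
    simp only [mem_ball, dist_zero_right, norm_mul]
    have : ‖Complex.exp (θ * Complex.I)‖ = 1 := by
      rw [Complex.norm_exp]; simp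
    rw [this]
    simp [Complex.norm_real, abs_of_pos hr0, hr1]
  have key : HasSum
      (fun k : ℕ => ∫ θ in (0:ℝ)..(2*π),
        b k * (↑r * Complex.exp (θ * Complex.I)) ^ k * Complex.exp (m * θ * Complex.I))
      (∫ θ in (0:ℝ)..(2*π), g (r * Complex.exp (θ * Complex.I)) * Complex.exp (m * θ * Complex.I)) := by
    apply intervalIntegral.hasSum_integral_of_dominated_convergence
      (bound := fun k _ => C * (r/ρ)^k)
    · intro k
      apply Continuous.aestronglyMeasurable
      fun_prop
    · intro k
      filter_upwards with θ _
      have h1 : ‖Complex.exp (θ * Complex.I)‖ = 1 := by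
        rw [Complex.norm_exp]; simp
      have h2 : ‖Complex.exp ((m:ℂ) * θ * Complex.I)‖ = 1 := by
        rw [Complex.norm_exp]; simp
      have h3 : ‖(r:ℂ) * Complex.exp (θ * Complex.I)‖ = r := by
        rw [norm_mul, h1, mul_one, Complex.norm_real, Real.norm_eq_abs, abs_of_pos hr0]
      rw [norm_mul, norm_mul, norm_pow, h3, h2, mul_one]
      calc ‖b k‖ * r ^ k = (‖b k‖ * ρ ^ k) * (r/ρ)^k := by
            rw [mul_assoc, ← mul_pow, show ρ * (r/ρ) = r by have := hρ0.ne'; field_simp]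
        _ ≤ C * (r/ρ)^k := by
            apply mul_le_mul_of_nonneg_right (hC' k); positivity
    · filter_upwards with θ _
      apply Summable.mul_left
      exact summable_geometric_of_lt_one (by positivity) (by rw [div_lt_one hρ0]; exact hrρ)
    · exact intervalIntegrable_const
    · filter_upwards with θ _
      exact (hgsum _ (hcirc θ)).mul_right _
  convert key using 2 with k
  rw [← intervalIntegral.integral_const_mul]
  congr 1 with θ
  rw [mul_pow, ← Complex.exp_nat_mul]
  rw [show ((((k:ℤ) + m : ℤ)):ℂ) * (θ:ℂ) * Complex.I
      = (k:ℂ) * ((θ:ℂ) * Complex.I) + (m:ℂ) * θ * Complex.I by push_cast; ring,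
    Complex.exp_add]
  ring

lemma intIntConj {f : ℝ → ℂ} {a c : ℝ}
    (hf : IntervalIntegrable f MeasureTheory.volume a c) :
    (∫ θ in a..c, (starRingEnd ℂ) (f θ)) = (starRingEnd ℂ) (∫ θ in a..c, f θ) := by
  have := Complex.conjCLE.toContinuousLinearMap.intervalIntegral_comp_comm hf
  simpa [Complex.conjCLE_apply] using this

lemma intIntRe {f : ℝ → ℂ} {a c : ℝ}
    (hf : IntervalIntegrable f MeasureTheory.volume a c) :
    (∫ θ in a..c, (f θ).re) = (∫ θ in a..c, f θ).re := by
  have := Complex.reCLM.intervalIntegral_comp_comm hf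
  simpa [Complex.reCLM_apply] using this

theorem stmt18 (g : ℂ → ℂ) (b : ℕ → ℂ) (hb0 : b 0 = 0)
    (hgsum : ∀ z ∈ ball (0 : ℂ) 1, HasSum (fun n : ℕ => b n * z ^ n) (g z))
    (hsub : ∃ φ : ℂ → ℂ, DifferentiableOn ℂ φ (ball (0 : ℂ) 1) ∧ φ 0 = 0 ∧
      (∀ z ∈ ball (0 : ℂ) 1, ‖φ z‖ < 1) ∧
      ∀ z ∈ ball (0 : ℂ) 1, g z = φ z / (1 - φ z)) :
    ∀ n : ℕ, 1 ≤ n → ‖b n‖ ≤ 1 := by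
  intro n hn
  obtain ⟨φ, hφd, hφ0, hφlt, hgφ⟩ := hsub
  have hgd : DifferentiableOn ℂ g (ball (0:ℂ) 1) := by
    have hne : ∀ z ∈ ball (0:ℂ) 1, (1 : ℂ) - φ z ≠ 0 := by
      intro z hz h
      have h1 : φ z = 1 := by linear_combination -h
      have := hφlt z hz
      rw [h1] at this; simp at this
    have : DifferentiableOn ℂ (fun z => φ z / (1 - φ z)) (ball (0:ℂ) 1) :=
      hφd.div ((differentiableOn_const 1).sub hφd) hne
    exact this.congr hgφ
  have hgc : ContinuousOn g (ball (0:ℂ) 1) := hgd.continuousOn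
  have hre : ∀ z ∈ ball (0:ℂ) 1, -(1/2) ≤ (g z).re := by
    intro z hz
    rw [hgφ z hz]
    exact refact _ (hφlt z hz)
  set m1 : ℤ := -(n:ℤ) with hm1
  have hm1ne : m1 ≠ 0 := by omega
  have hmain : ∀ r : ℝ, 0 < r → r < 1 → ‖b n‖ * r ^ n ≤ 1 := by
    intro r hr0 hr1
    have hcirc : ∀ θ : ℝ, (↑r * Complex.exp (θ * Complex.I)) ∈ ball (0:ℂ) 1 := by
      intro θ
      simp only [mem_ball, dist_zero_right, norm_mul]
      have : ‖Complex.exp (θ * Complex.I)‖ = 1 := by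
        rw [Complex.norm_exp]; simp
      rw [this]
      simp [Complex.norm_real, abs_of_pos hr0, hr1]
    have hGcont : Continuous fun θ : ℝ => g ((r:ℂ) * Complex.exp (θ * Complex.I)) :=
      hgc.comp_continuous (by fun_prop) hcirc
    have hecont : ∀ m : ℤ, Continuous fun θ : ℝ => Complex.exp ((m:ℂ) * θ * Complex.I) := by
      intro m; fun_prop
    have hJ : ∀ m : ℤ, HasSum
        (fun k : ℕ => b k * (r:ℂ) ^ k * (if ((k:ℤ) + m) = 0 then (2*π:ℂ) else 0))
        (∫ θ in (0:ℝ)..(2*π), g (r * Complex.exp (θ * Complex.I))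
          * Complex.exp ((m:ℂ) * θ * Complex.I)) := by
      intro m
      have h := hasSum_int g b hgsum hgc r hr0 hr1 m
      simp only [Efact] at h
      exact h
    -- J m1 = 2π b_n r^n
    have hJn : (∫ θ in (0:ℝ)..(2*π), g (r * Complex.exp (θ * Complex.I))
        * Complex.exp ((m1:ℂ) * θ * Complex.I)) = (2*π:ℂ) * (b n * r ^ n) := by
      have h1 := hJ m1
      have h2 : (fun k : ℕ => b k * (r:ℂ) ^ k * (if ((k:ℤ) + m1) = 0 then (2*π:ℂ) else 0))
          = fun k : ℕ => if k = n then (2*π:ℂ) * (b n * r ^ n) else 0 := by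
        funext k
        rcases eq_or_ne k n with h | h
        · subst h
          rw [if_pos (by omega), if_pos rfl]; ring
        · rw [if_neg (by omega), if_neg h, mul_zero]
      rw [h2] at h1
      exact h1.unique (hasSum_ite_eq n _)
    -- J 0 = 0
    have hJ0 : (∫ θ in (0:ℝ)..(2*π), g (r * Complex.exp (θ * Complex.I))) = 0 := by
      have h1 := hJ 0
      simp only [Int.cast_zero, zero_mul, Complex.exp_zero, mul_one] at h1
      have h2 : (fun k : ℕ => b k * (r:ℂ) ^ k * (if ((k:ℤ) + 0) = 0 then (2*π:ℂ) else 0))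
          = fun k : ℕ => (0:ℂ) := by
        funext k
        rcases eq_or_ne k 0 with h | h
        · subst h; rw [if_pos (by omega), hb0, zero_mul, zero_mul]
        · rw [if_neg (by omega), mul_zero]
      rw [h2] at h1
      exact h1.unique hasSum_zero
    -- J n = 0
    have hJp : (∫ θ in (0:ℝ)..(2*π), g (r * Complex.exp (θ * Complex.I))
        * Complex.exp (((n:ℤ):ℂ) * θ * Complex.I)) = 0 := by
      have h1 := hJ (n:ℤ)
      have h2 : (fun k : ℕ => b k * (r:ℂ) ^ k * (if ((k:ℤ) + (n:ℤ)) = 0 then (2*π:ℂ) else 0))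
          = fun k : ℕ => (0:ℂ) := by
        funext k
        rw [if_neg (by omega), mul_zero]
      rw [h2] at h1
      exact h1.unique hasSum_zero
    -- conjugate integral
    have hintn : IntervalIntegrable (fun θ : ℝ => g (r * Complex.exp (θ * Complex.I))
        * Complex.exp (((n:ℤ):ℂ) * θ * Complex.I)) MeasureTheory.volume 0 (2*π) :=
      (hGcont.mul (hecont (n:ℤ))).intervalIntegrable _ _
    have hK : (∫ θ in (0:ℝ)..(2*π), (starRingEnd ℂ) (g (r * Complex.exp (θ * Complex.I)))
        * Complex.exp ((m1:ℂ) * θ * Complex.I)) = 0 := by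
      have hptw : ∀ θ : ℝ, (starRingEnd ℂ) (g (r * Complex.exp (θ * Complex.I)))
          * Complex.exp ((m1:ℂ) * θ * Complex.I)
          = (starRingEnd ℂ) (g (r * Complex.exp (θ * Complex.I))
            * Complex.exp (((n:ℤ):ℂ) * θ * Complex.I)) := by
        intro θ
        rw [map_mul, ← Complex.exp_conj]
        congr 2
        simp only [map_mul, Complex.conj_ofReal, Complex.conj_I, map_intCast, map_natCast]
        rw [hm1]
        push_cast
        ring
      simp only [hptw]
      rw [intIntConj hintn, hJp, map_zero]
    -- the combined function F
    set F : ℝ → ℂ := fun θ =>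
      (2 * g ((r:ℂ) * Complex.exp (θ * Complex.I))
        + 2 * (starRingEnd ℂ) (g ((r:ℂ) * Complex.exp (θ * Complex.I))) + 2)
        * Complex.exp ((m1:ℂ) * θ * Complex.I) with hFdef
    have hconjcont : Continuous fun θ : ℝ =>
        (starRingEnd ℂ) (g ((r:ℂ) * Complex.exp (θ * Complex.I))) :=
      Complex.continuous_conj.comp hGcont
    -- ∫ F = 4π b_n r^n
    have hintF : (∫ θ in (0:ℝ)..(2*π), F θ) = 2 * ((2*π:ℂ) * (b n * r ^ n)) := by
      have e1 : IntervalIntegrable (fun θ : ℝ => 2 * g ((r:ℂ) * Complex.exp (θ * Complex.I))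
          * Complex.exp ((m1:ℂ) * θ * Complex.I)) MeasureTheory.volume 0 (2*π) :=
        ((continuous_const.mul hGcont).mul (hecont m1)).intervalIntegrable _ _
      have e2 : IntervalIntegrable (fun θ : ℝ =>
          2 * (starRingEnd ℂ) (g ((r:ℂ) * Complex.exp (θ * Complex.I)))
          * Complex.exp ((m1:ℂ) * θ * Complex.I)) MeasureTheory.volume 0 (2*π) :=
        ((continuous_const.mul hconjcont).mul (hecont m1)).intervalIntegrable _ _
      have e3 : IntervalIntegrable (fun θ : ℝ =>
          2 * Complex.exp ((m1:ℂ) * θ * Complex.I)) MeasureTheory.volume 0 (2*π) :=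
        (continuous_const.mul (hecont m1)).intervalIntegrable _ _
      have hsplit : F = fun θ : ℝ =>
          2 * g ((r:ℂ) * Complex.exp (θ * Complex.I)) * Complex.exp ((m1:ℂ) * θ * Complex.I)
          + 2 * (starRingEnd ℂ) (g ((r:ℂ) * Complex.exp (θ * Complex.I)))
            * Complex.exp ((m1:ℂ) * θ * Complex.I)
          + 2 * Complex.exp ((m1:ℂ) * θ * Complex.I) := by
        funext θ; rw [hFdef]; ring
      rw [hsplit, intervalIntegral.integral_add (e1.add e2) e3,
        intervalIntegral.integral_add e1 e2]
      have c1 : (∫ θ in (0:ℝ)..(2*π), 2 * g ((r:ℂ) * Complex.exp (θ * Complex.I))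
          * Complex.exp ((m1:ℂ) * θ * Complex.I)) = 2 * ((2*π:ℂ) * (b n * r ^ n)) := by
        rw [← hJn, ← intervalIntegral.integral_const_mul]
        congr 1 with θ; ring
      have c2 : (∫ θ in (0:ℝ)..(2*π),
          2 * (starRingEnd ℂ) (g ((r:ℂ) * Complex.exp (θ * Complex.I)))
          * Complex.exp ((m1:ℂ) * θ * Complex.I)) = 0 := by
        have heq2 : (fun θ : ℝ => 2 * (starRingEnd ℂ) (g ((r:ℂ) * Complex.exp (θ * Complex.I)))
            * Complex.exp ((m1:ℂ) * θ * Complex.I))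
            = fun θ : ℝ => (2:ℂ) * ((starRingEnd ℂ) (g ((r:ℂ) * Complex.exp (θ * Complex.I)))
            * Complex.exp ((m1:ℂ) * θ * Complex.I)) := by
          funext θ; ring
        rw [heq2, intervalIntegral.integral_const_mul, hK, mul_zero]
      have c3 : (∫ θ in (0:ℝ)..(2*π), 2 * Complex.exp ((m1:ℂ) * θ * Complex.I)) = 0 := by
        rw [intervalIntegral.integral_const_mul, Efact m1, if_neg hm1ne, mul_zero]
      rw [c1, c2, c3]; ring
    -- pointwise norm of F
    have hFnorm : ∀ θ : ℝ, ‖F θ‖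
        = 4 * (g ((r:ℂ) * Complex.exp (θ * Complex.I))).re + 2 := by
      intro θ
      rw [hFdef]
      set w := g ((r:ℂ) * Complex.exp (θ * Complex.I)) with hw
      have h2 : ‖Complex.exp ((m1:ℂ) * θ * Complex.I)‖ = 1 := by
        rw [Complex.norm_exp]; simp
      rw [norm_mul, h2, mul_one]
      have hval : 2 * w + 2 * (starRingEnd ℂ) w + 2 = ((4 * w.re + 2 : ℝ) : ℂ) := by
        have hc := Complex.add_conj w
        push_cast at hc ⊢
        linear_combination 2 * hc
      rw [hval, _root_.Complex.norm_real, Real.norm_eq_abs, _root_.abs_of_nonneg]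
      have := hre _ (hcirc θ); rw [← hw] at this; linarith
    -- integral of the norm
    have hnormint : (∫ θ in (0:ℝ)..(2*π), ‖F θ‖) = 4 * π := by
      have heq : (fun θ : ℝ => ‖F θ‖)
          = fun θ : ℝ => 4 * (g ((r:ℂ) * Complex.exp (θ * Complex.I))).re + 2 := by
        funext θ; exact hFnorm θ
      rw [heq]
      have hGint : IntervalIntegrable (fun θ : ℝ => g ((r:ℂ) * Complex.exp (θ * Complex.I)))
          MeasureTheory.volume 0 (2*π) := hGcont.intervalIntegrable _ _
      have hreint : (∫ θ in (0:ℝ)..(2*π), (g ((r:ℂ) * Complex.exp (θ * Complex.I))).re)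
          = 0 := by
        rw [intIntRe hGint, hJ0]; simp
      have hre_cont : Continuous fun θ : ℝ =>
          (g ((r:ℂ) * Complex.exp (θ * Complex.I))).re :=
        Complex.continuous_re.comp hGcont
      rw [intervalIntegral.integral_add
          (f := fun θ : ℝ => 4 * (g ((r:ℂ) * Complex.exp (θ * Complex.I))).re)
          ((continuous_const.mul hre_cont).intervalIntegrable _ _)
        intervalIntegrable_const,
        intervalIntegral.integral_const_mul, hreint]
      simp
      ring
    -- conclude
    have hbound : ‖∫ θ in (0:ℝ)..(2*π), F θ‖ ≤ 4 * π := by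
      rw [← hnormint]
      exact intervalIntegral.norm_integral_le_integral_norm (by positivity)
    rw [hintF] at hbound
    have hπ : (0:ℝ) < π := Real.pi_pos
    have hnorm2 : ‖(2:ℂ) * ((2*π:ℂ) * (b n * (r:ℂ) ^ n))‖ = 4 * π * (‖b n‖ * r ^ n) := by
      simp only [norm_mul, norm_pow, _root_.Complex.norm_real, Real.norm_eq_abs,
        _root_.abs_of_pos hπ, _root_.abs_of_pos hr0]
      norm_num
      ring
    rw [hnorm2] at hbound
    have h4 : (0:ℝ) < 4 * π := by positivity
    exact le_of_mul_le_mul_left (by rw [mul_one]; exact hbound) h4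
  have hc : Filter.Tendsto (fun r : ℝ => ‖b n‖ * r ^ n) (nhdsWithin 1 (Set.Ioo 0 1))
      (nhds (‖b n‖ * 1 ^ n)) := by
    apply Filter.Tendsto.mono_left _ nhdsWithin_le_nhds
    exact (continuous_const.mul (continuous_pow n)).tendsto 1
  have hne : (nhdsWithin (1:ℝ) (Set.Ioo 0 1)).NeBot := by
    apply mem_closure_iff_nhdsWithin_neBot.mp
    rw [closure_Ioo (by norm_num : (0:ℝ) ≠ 1)]
    exact ⟨by norm_num, le_refl 1⟩
  have hle : ‖b n‖ * 1 ^ n ≤ 1 := by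
    apply le_of_tendsto hc
    filter_upwards [self_mem_nhdsWithin] with r hr
    exact hmain r hr.1 hr.2
  simpa using hle
end
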